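/- arXiv:2108.06945 — 6 statements merged into one kernel-verified Lean document; each statement's English description precedes it below -/
import Mathlib

section
/- Let (c_k)_{k∈ℤ} be a square-summable family of complex numbers. Fix n ∈ ℕ with n ≥ 2 and 1 ≤ r ≤ n−1. If c satisfies the symmetry relations c_{nl − (n−1) + a + m} = c_{−nl − (n−1) + a + m} for all l ∈ ℤ and all 0 ≤ a, m ≤ n−1, then c_{r+nl} = 0 for all l ∈ ℤ and c_{nl} = c_{−nl} for all l ∈ ℤ. -/
/-- If `(c_k)` is square-summable, `n ≥ 2`, `1 ≤ r ≤ n-1`, and `c` satisfies the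
symmetry relations `c_{nl-(n-1)+a+m} = c_{-nl-(n-1)+a+m}` for all `l ∈ ℤ` and
`0 ≤ a, m ≤ n-1`, then `c_{r+nl} = 0` for all `l` and `c_{nl} = c_{-nl}` for all `l`. -/
theorem block_sym_coeff_vanish (c : ℤ → ℂ) (hc : Summable fun k => ‖c k‖ ^ 2)
    (n : ℕ) (hn : 2 ≤ n) (r : ℕ) (hr1 : 1 ≤ r) (hr2 : r ≤ n - 1)
    (h : ∀ (l : ℤ) (a m : ℕ), a ≤ n - 1 → m ≤ n - 1 →
      c ((n : ℤ) * l - ((n : ℤ) - 1) + a + m) = c (-((n : ℤ) * l) - ((n : ℤ) - 1) + a + m)) :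
    (∀ l : ℤ, c ((r : ℤ) + n * l) = 0) ∧ (∀ l : ℤ, c ((n : ℤ) * l) = c (-((n : ℤ) * l))) := by
  -- Key reformulation: c(nl + j) = c(-nl + j) for all |j| ≤ n-1
  have key : ∀ (l j : ℤ), -((n:ℤ)-1) ≤ j → j ≤ (n:ℤ)-1 →
      c ((n:ℤ)*l + j) = c (-((n:ℤ)*l) + j) := by
    intro l j hj1 hj2
    set s : ℕ := (j + ((n:ℤ)-1)).toNat with hs
    have hsz : (s:ℤ) = j + ((n:ℤ)-1) := Int.toNat_of_nonneg (by omega)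
    set a : ℕ := min s (n-1) with ha
    set m : ℕ := s - a with hm
    have h1 : a ≤ n - 1 := min_le_right _ _
    have h2 : m ≤ n - 1 := by omega
    have hsum : (a:ℤ) + (m:ℤ) = (s:ℤ) := by
      have hn' : a + m = s := by omega
      exact_mod_cast congrArg (Nat.cast : ℕ → ℤ) hn'
    have := h l a m h1 h2
    have e1 : (n:ℤ)*l - ((n:ℤ)-1) + a + m = (n:ℤ)*l + j := by omega
    have e2 : -((n:ℤ)*l) - ((n:ℤ)-1) + a + m = -((n:ℤ)*l) + j := by omega
    rw [e1, e2] at this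
    exact this
  have hr2' : (r:ℤ) ≤ (n:ℤ) - 1 := by omega
  have hr1' : (1:ℤ) ≤ (r:ℤ) := by exact_mod_cast hr1
  -- evenness in l of F l := c (r + n l)
  have A : ∀ l : ℤ, c ((r:ℤ) + n*l) = c ((r:ℤ) + n*(-l)) := by
    intro l
    have := key l (r:ℤ) (by omega) hr2'
    calc c ((r:ℤ) + n*l) = c ((n:ℤ)*l + r) := by ring_nf
      _ = c (-((n:ℤ)*l) + r) := this
      _ = c ((r:ℤ) + n*(-l)) := by ring_nf
  have B : ∀ l : ℤ, c ((r:ℤ) + n*(l-1)) = c ((r:ℤ) + n*(-l-1)) := by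
    intro l
    have := key l ((r:ℤ) - n) (by omega) (by omega)
    calc c ((r:ℤ) + n*(l-1)) = c ((n:ℤ)*l + ((r:ℤ) - n)) := by ring_nf
      _ = c (-((n:ℤ)*l) + ((r:ℤ) - n)) := this
      _ = c ((r:ℤ) + n*(-l-1)) := by ring_nf
  -- 2-periodicity
  have per : ∀ l : ℤ, c ((r:ℤ) + n*(l+2)) = c ((r:ℤ) + n*l) := by
    intro l
    calc c ((r:ℤ) + n*(l+2)) = c ((r:ℤ) + n*(-(l+2))) := A (l+2)
      _ = c ((r:ℤ) + n*(-(l+1)-1)) := by congr 1; ring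
      _ = c ((r:ℤ) + n*((l+1)-1)) := (B (l+1)).symm
      _ = c ((r:ℤ) + n*l) := by congr 1; ring
  have shift : ∀ (l : ℤ) (k : ℕ), c ((r:ℤ) + n*(l + 2*(k:ℤ))) = c ((r:ℤ) + n*l) := by
    intro l k
    induction k with
    | zero => norm_num
    | succ k ih =>
      have : (l + 2*((k+1:ℕ):ℤ)) = (l + 2*(k:ℤ)) + 2 := by push_cast; ring
      rw [this, per, ih]
  constructor
  · intro l
    -- The sequence k ↦ ‖c (r + n (l + 2k))‖² is constant ‖c (r+nl)‖² and tends to 0.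
    have hten : Filter.Tendsto (fun k => ‖c k‖^2) Filter.cofinite (nhds 0) :=
      hc.tendsto_cofinite_zero
    have hg : Function.Injective (fun k : ℕ => (r:ℤ) + n*(l + 2*(k:ℤ))) := by
      intro a b hab
      simp only at hab
      have h1 := add_left_cancel hab
      have hn0 : (n:ℤ) ≠ 0 := by positivity
      have h2 := mul_left_cancel₀ hn0 h1
      have : 2*(a:ℤ) = 2*(b:ℤ) := by omega
      omega
    have hcomp : Filter.Tendsto (fun k : ℕ => ‖c ((r:ℤ) + n*(l + 2*(k:ℤ)))‖^2)
        Filter.cofinite (nhds 0) := hten.comp hg.tendsto_cofinite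
    have heq : (fun k : ℕ => ‖c ((r:ℤ) + n*(l + 2*(k:ℤ)))‖^2)
        = fun _ : ℕ => ‖c ((r:ℤ) + n*l)‖^2 := by
      funext k; rw [shift]
    rw [heq] at hcomp
    have : ‖c ((r:ℤ) + n*l)‖^2 = 0 := by
      have hne : (Filter.cofinite : Filter ℕ).NeBot := by
        rw [Nat.cofinite_eq_atTop]; infer_instance
      exact tendsto_nhds_unique tendsto_const_nhds hcomp
    have := pow_eq_zero_iff (n := 2) (by norm_num) |>.mp this
    exact norm_eq_zero.mp this
  · intro l
    have := key l 0 (by omega) (by omega)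
    simpa using this
end

section
/- Let φ ∈ L^∞(𝕋) with Fourier coefficients φ̂(k), k ∈ ℤ, and let T_φ be the Toeplitz operator on H²(𝔻) given by T_φ f = P(φf) where P is the orthogonal projection of L²(𝕋) onto H²(𝔻). Fix n ≥ 1 and let C_n be the conjugation on H²(𝔻) defined by C_n(Σ_{k≥0} Σ_{m=0}^{n−1} a_{nk+m} z^{nk+m}) = Σ_{k≥0} Σ_{m=0}^{n−1} conj(a_{nk+(n−m−1)}) z^{nk+m}. Then C_n T_φ C_n = T_φ* if and only if φ̂(nl) = φ̂(−nl) for all l ∈ ℤ and φ̂(r+nl) = 0 for all l ∈ ℤ and all 1 ≤ r ≤ n−1. -/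
open scoped ComplexConjugate

/-- The Hardy space `H²(𝔻)`, identified with `ℓ²(ℕ, ℂ)` via `z^n ↦ e n`. -/
noncomputable abbrev HardySpace := lp (fun _ : ℕ => ℂ) 2

/-- The standard basis vector `e j`, corresponding to `z^j`. -/
noncomputable def e (j : ℕ) : HardySpace := lp.single 2 j 1

/-!
On coordinates `C_n` is `a ↦ conj ∘ a ∘ σ` for the block reversal `σ`, so `C_n T C_n = T*`
says exactly that the matrix of `T` satisfies `t (σ p) (σ j) = t j p`, i.e.
`φ̂ (σ p - σ j) = φ̂ (j - p)`. With `p = n q + s` and `j = n k + m` this becomes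
`φ̂ (n l + d) = φ̂ (-n l + d)` for all `l` and `|d| < n`. For `0 < r < n`, the instances
`d = r` and `d = r - n` make `l ↦ φ̂ (r + n l)` even and invariant under `l ↦ -l - 2`, hence
`2`-periodic, and a periodic sequence tending to `0` vanishes.
-/

open Filter Topology ContinuousLinearMap

lemma Summable.tendsto_cofinite_zero_of_norm_sq {ι E : Type*} [SeminormedAddCommGroup E]
    {f : ι → E} (h : Summable fun i => ‖f i‖ ^ 2) : Tendsto f cofinite (𝓝 0) := by
  rw [tendsto_zero_iff_norm_tendsto_zero]
  simpa [Real.sqrt_sq (norm_nonneg _)] using h.tendsto_cofinite_zero.sqrt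

theorem Function.Periodic.eq_zero_of_tendsto_cofinite {E : Type*} [TopologicalSpace E]
    [T2Space E] [Zero E] {f : ℤ → E} {c : ℤ} (hf : Function.Periodic f c) (hc : c ≠ 0)
    (h : Tendsto f cofinite (𝓝 0)) : f = 0 := by
  funext t
  have hinj : Function.Injective fun k : ℤ => t - k • c := fun a b hab => by
    simpa [hc] using hab
  have hlim := h.comp hinj.tendsto_cofinite
  simp only [Function.comp_def, hf.sub_zsmul_eq] at hlim
  exact tendsto_nhds_unique tendsto_const_nhds hlim

lemma e_apply (j i : ℕ) : e j i = if i = j then 1 else 0 := by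
  simp [e, lp.single_apply, Pi.single_apply]

lemma hasSum_mul_e_apply (c : ℕ → ℂ) (j : ℕ) : HasSum (fun i => e j i * c i) (c j) := by
  convert hasSum_ite_eq j (c j) using 2 with i
  split_ifs with h <;> simp [e_apply, h]

lemma hasSum_apply_e_mul (T : HardySpace →L[ℂ] HardySpace) (y : HardySpace) (i : ℕ) :
    HasSum (fun j => y j * T (e j) i) (T y i) := by
  have h := (lp.hasSum_single ENNReal.ofNat_ne_top y).mapL ((lp.evalCLM ℂ _ 2 i).comp T)
  have hs : ∀ j, lp.single 2 j (y j) = y j • e j := fun j => by simp [e, ← lp.single_smul]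
  simpa [hs, lp.evalCLM] using h

lemma hasSum_adjoint_apply (T : HardySpace →L[ℂ] HardySpace) (x : HardySpace) (p : ℕ) :
    HasSum (fun j => x j * conj (T (e p) j)) (adjoint T x p) := by
  have h : adjoint T x p = inner ℂ (T (e p)) x := by
    rw [← adjoint_inner_right, e, lp.inner_single_left (𝕜 := ℂ)]; simp
  simpa [h] using lp.hasSum_inner (𝕜 := ℂ) (T (e p)) x

section Conjugation

variable {σ : ℕ → ℕ} {C : HardySpace → HardySpace}

lemma hasSum_conj_comp_comp_apply (hσ : Function.Involutive σ)
    (hC : ∀ a j, C a j = conj (a (σ j))) (T : HardySpace →L[ℂ] HardySpace) (x : HardySpace)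
    (p : ℕ) : HasSum (fun j => x j * conj (T (e (σ j)) (σ p))) (C (T (C x)) p) := by
  rw [hC, ← (hσ.toPerm σ).hasSum_iff]
  simpa [Function.comp_def, hC, hσ _] using (hasSum_apply_e_mul T (C x) (σ p)).star

theorem conj_comp_comp_eq_adjoint_iff (hσ : Function.Involutive σ)
    (hC : ∀ a j, C a j = conj (a (σ j))) (T : HardySpace →L[ℂ] HardySpace) :
    (∀ x, C (T (C x)) = adjoint T x) ↔ ∀ p j, T (e (σ j)) (σ p) = T (e p) j := by
  constructor
  · intro h p j
    have hC_e := (hasSum_conj_comp_comp_apply hσ hC T (e j) p).unique (hasSum_mul_e_apply _ j)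
    have hadj_e := (hasSum_adjoint_apply T (e j) p).unique (hasSum_mul_e_apply _ j)
    exact (starRingEnd ℂ).injective (hC_e.symm.trans (h (e j) ▸ hadj_e))
  · intro h x
    ext p
    refine (hasSum_conj_comp_comp_apply hσ hC T x p).unique ?_
    simpa only [h] using hasSum_adjoint_apply T x p

end Conjugation

def blockRev (n j : ℕ) : ℕ := n * (j / n) + (n - 1 - j % n)

section BlockReversal

variable {n : ℕ}

lemma blockRev_mul_add (k : ℕ) {m : ℕ} (hm : m < n) :
    blockRev n (n * k + m) = n * k + (n - 1 - m) := by
  have hn : 0 < n := by omega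
  simp [blockRev, Nat.mul_add_div hn, Nat.div_eq_of_lt hm, Nat.mod_eq_of_lt hm]

lemma exists_mul_add (hn : 0 < n) (p : ℕ) : ∃ q s, s < n ∧ n * q + s = p :=
  ⟨p / n, p % n, Nat.mod_lt p hn, Nat.div_add_mod p n⟩

lemma blockRev_involutive (hn : 0 < n) : Function.Involutive (blockRev n) := by
  intro p
  obtain ⟨q, s, hs, rfl⟩ := exists_mul_add hn p
  rw [blockRev_mul_add q hs, blockRev_mul_add q (by omega), Nat.sub_sub_self (by omega)]

lemma blockRev_sub_blockRev {q s k m : ℕ} (hs : s < n) (hm : m < n) :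
    (blockRev n (n * q + s) : ℤ) - blockRev n (n * k + m) =
      n * ((q : ℤ) - k) + ((m : ℤ) - s) := by
  rw [blockRev_mul_add q hs, blockRev_mul_add k hm]
  push_cast [Nat.sub_sub, Nat.cast_sub (show 1 + s ≤ n by omega),
    Nat.cast_sub (show 1 + m ≤ n by omega)]
  ring

theorem forall_blockRev_sub_iff (hn : 0 < n) (φ : ℤ → ℂ) :
    (∀ p j : ℕ, φ (blockRev n p - blockRev n j) = φ (j - p)) ↔
      ∀ l d : ℤ, |d| < n → φ (n * l + d) = φ (-(n * l) + d) := by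
  constructor
  · intro h l d hd
    obtain ⟨hd₁, hd₂⟩ := abs_lt.mp hd
    obtain ⟨q, k, rfl⟩ : ∃ q k : ℕ, (q : ℤ) - k = l := ⟨l.toNat, (-l).toNat, by omega⟩
    obtain ⟨m, s, hm, hs, rfl⟩ : ∃ m s : ℕ, m < n ∧ s < n ∧ (m : ℤ) - s = d :=
      ⟨d.toNat, (-d).toNat, by omega, by omega, by omega⟩
    convert h (n * q + s) (n * k + m) using 2
    · rw [blockRev_sub_blockRev hs hm]
    · push_cast; ring
  · intro h p j
    obtain ⟨q, s, hs, rfl⟩ := exists_mul_add hn p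
    obtain ⟨k, m, hm, rfl⟩ := exists_mul_add hn j
    rw [blockRev_sub_blockRev hs hm, h _ _ (abs_lt.mpr ⟨by omega, by omega⟩)]
    push_cast; ring_nf

theorem forall_mul_add_symm_iff (hn : 0 < n) {φ : ℤ → ℂ} (hφ : Tendsto φ cofinite (𝓝 0)) :
    (∀ l d : ℤ, |d| < n → φ (n * l + d) = φ (-(n * l) + d)) ↔
      ((∀ l : ℤ, φ ((n : ℤ) * l) = φ (-((n : ℤ) * l))) ∧
        ∀ (l : ℤ) (r : ℕ), 1 ≤ r → r ≤ n - 1 → φ ((r : ℤ) + n * l) = 0) := by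
  constructor
  · intro h
    refine ⟨fun l => by simpa using h l 0 (by simpa using hn), fun l r hr₁ hr₂ => ?_⟩
    set g : ℤ → ℂ := fun t => φ (r + n * t)
    have hg_neg (t : ℤ) : g (-t) = g t := by
      simp only [g]
      convert (h t r (by rw [abs_of_nonneg] <;> omega)).symm using 2 <;> ring
    have hg_shift (t : ℤ) : g (-t - 2) = g t := by
      simp only [g]
      convert (h (t + 1) (r - n) (by rw [abs_of_neg] <;> omega)).symm using 2 <;> ring
    have hg_periodic : Function.Periodic g 2 := fun t => by
      rw [← hg_shift t, ← hg_neg (-t - 2)]; ring_nf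
    have hinj : Function.Injective fun t : ℤ => (r : ℤ) + n * t := fun a b hab => by
      simpa [hn.ne'] using hab
    have hg_lim : Tendsto g cofinite (𝓝 0) := hφ.comp hinj.tendsto_cofinite
    exact congrFun (hg_periodic.eq_zero_of_tendsto_cofinite two_ne_zero hg_lim) l
  · rintro ⟨h₀, hr⟩ l d hd
    have hvanish (t : ℤ) (ht : ¬(n : ℤ) ∣ t) : φ t = 0 := by
      have hpos : 0 < t % n := lt_of_le_of_ne (Int.emod_nonneg t (by omega))
        (Ne.symm fun h => ht (Int.dvd_of_emod_eq_zero h))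
      have hlt := Int.emod_lt_of_pos t (show (0 : ℤ) < n by omega)
      have h := hr (t / n) (t % n).toNat (by omega) (by omega)
      rwa [Int.toNat_of_nonneg hpos.le, Int.emod_add_mul_ediv] at h
    rcases eq_or_ne d 0 with rfl | hd₀
    · simpa using h₀ l
    · have hdn : ¬(n : ℤ) ∣ d := fun h => hd₀ (Int.eq_zero_of_abs_lt_dvd h hd)
      rw [hvanish _ (by rwa [Int.dvd_add_right (dvd_mul_right _ _)]),
        hvanish _ (by rwa [Int.dvd_add_right (dvd_neg.mpr (dvd_mul_right _ _))])]

end BlockReversal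

/-- Characterization of `C_n`-symmetric Toeplitz operators: for `φ ∈ L^∞(𝕋)` with Fourier
coefficients `φhat` (hence square-summable), the Toeplitz operator `T_φ`
(given on the basis by `(T_φ e_j)_m = φhat (m - j)`) satisfies `C_n T_φ C_n = T_φ*`
for the block-reversal conjugation `C_n` if and only if `φhat (nl) = φhat (-nl)` for all
`l ∈ ℤ` and `φhat (r + nl) = 0` for all `l ∈ ℤ` and `1 ≤ r ≤ n-1`. -/
theorem toeplitz_Cn_symmetric_iff (n : ℕ) (hn : 1 ≤ n) (φhat : ℤ → ℂ)
    (hsq : Summable fun k => ‖φhat k‖ ^ 2)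
    (T : HardySpace →L[ℂ] HardySpace)
    (hT : ∀ j m : ℕ, (T (e j)) m = φhat ((m : ℤ) - (j : ℤ)))
    (C : HardySpace → HardySpace)
    (hC : ∀ (a : HardySpace) (k m : ℕ), m < n →
      (C a) (n * k + m) = conj (a (n * k + (n - 1 - m)))) :
    (∀ x, C (T (C x)) = ContinuousLinearMap.adjoint T x) ↔
      ((∀ l : ℤ, φhat ((n : ℤ) * l) = φhat (-((n : ℤ) * l))) ∧
        ∀ (l : ℤ) (r : ℕ), 1 ≤ r → r ≤ n - 1 → φhat ((r : ℤ) + n * l) = 0) := by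
  have hC_apply (a : HardySpace) (j : ℕ) : C a j = conj (a (blockRev n j)) := by
    unfold blockRev
    simpa only [Nat.div_add_mod] using hC a (j / n) (j % n) (Nat.mod_lt j hn)
  rw [conj_comp_comp_eq_adjoint_iff (blockRev_involutive hn) hC_apply]
  simp only [hT]
  exact (forall_blockRev_sub_iff hn φhat).trans
    (forall_mul_add_symm_iff hn hsq.tendsto_cofinite_zero_of_norm_sq)
end

section
/- Let φ ∈ L^∞(𝕋) and suppose p = mq + 1 for some m ≥ 2 and q ≥ 1, with i = q−1 and j = p−1. Let C_p^{i,j} be the transposition conjugation on H²(𝔻) swapping coefficients of z^{i+pk} and z^{j+pk} and conjugating the others. Then T_φ is C_p^{i,j}-symmetric if and only if φ̂(pl) = φ̂(−pl) for all l ∈ ℤ, and φ̂(r+pl) = 0 for all l ∈ ℤ and 1 ≤ r ≤ p−1. -/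
open scoped ComplexConjugate

/-!
Write `C x = conj ∘ x ∘ σ`, where `σ` swaps the residue classes `i` and `j` modulo `p` by
translation. Comparing matrix entries, `C T_φ C = T_φ*` says exactly that
`φ̂(σa - σb) = φ̂(b - a)` for all `a, b`. If `a ≡ b [MOD p]` then `σa - σb = a - b`, which gives
evenness on `pℤ` and, conversely, is all the condition asks when `φ̂` vanishes off `pℤ`. For
`z ∉ pℤ`, reflecting first through a pair with `a` in class `i` and then through a pair with `a`
in class `j` yields `w ∉ pℤ` with `w ≤ z - 2(j - i)` and `φ̂ w = φ̂ z`; iterating produces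
infinitely many equal coefficients, which must vanish because `φ̂ ∈ ℓ²`.
-/

open Equiv Filter Topology ContinuousLinearMap

def residueSwap (p i j n : ℕ) : ℕ := swap i j (n % p) + p * (n / p)

section residueSwap

variable {p i j : ℕ}

theorem swap_apply_lt (hi : i < p) (hj : j < p) {r : ℕ} (hr : r < p) : swap i j r < p := by
  rw [swap_apply_def]; split_ifs <;> omega

theorem residueSwap_add_mul {r : ℕ} (hr : r < p) (k : ℕ) :
    residueSwap p i j (r + p * k) = swap i j r + p * k := by
  have hp : 0 < p := by omega
  rw [residueSwap, Nat.add_mul_mod_self_left, Nat.mod_eq_of_lt hr, Nat.add_mul_div_left _ _ hp,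
    Nat.div_eq_of_lt hr, zero_add]

theorem residueSwap_involutive (hi : i < p) (hj : j < p) :
    Function.Involutive (residueSwap p i j) := fun n => by
  have hn := swap_apply_lt hi hj (Nat.mod_lt n (by omega))
  rw [show residueSwap p i j n = swap i j (n % p) + p * (n / p) from rfl, residueSwap_add_mul hn,
    swap_apply_self, Nat.mod_add_div]

theorem residueSwap_mod (hi : i < p) (hj : j < p) (n : ℕ) :
    residueSwap p i j n % p = swap i j (n % p) := by
  rw [residueSwap, Nat.add_mul_mod_self_left,
    Nat.mod_eq_of_lt (swap_apply_lt hi hj (Nat.mod_lt n (by omega)))]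

theorem residueSwap_add_mod (p i j n : ℕ) :
    residueSwap p i j n + n % p = swap i j (n % p) + n := by
  have := Nat.mod_add_div n p
  rw [residueSwap]; omega

theorem residueSwap_modEq_iff (hi : i < p) (hj : j < p) {a b : ℕ} :
    residueSwap p i j a ≡ residueSwap p i j b [MOD p] ↔ a ≡ b [MOD p] := by
  rw [Nat.ModEq, Nat.ModEq, residueSwap_mod hi hj, residueSwap_mod hi hj]
  exact (swap i j).injective.eq_iff

theorem residueSwap_sub_residueSwap_dvd_iff (hi : i < p) (hj : j < p) {a b : ℕ} :
    (p : ℤ) ∣ (residueSwap p i j a : ℤ) - residueSwap p i j b ↔ (p : ℤ) ∣ (a : ℤ) - b := by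
  rw [← Nat.modEq_iff_dvd, ← Nat.modEq_iff_dvd, residueSwap_modEq_iff hi hj]

theorem residueSwap_sub_residueSwap {a b : ℕ} (h : a ≡ b [MOD p]) :
    (residueSwap p i j a : ℤ) - residueSwap p i j b = a - b := by
  have ha := residueSwap_add_mod p i j a
  have hb := residueSwap_add_mod p i j b
  rw [show a % p = b % p from h] at ha
  omega

theorem residueSwap_of_mod_eq_left {n : ℕ} (h : n % p = i) :
    residueSwap p i j n + i = n + j := by
  have := residueSwap_add_mod p i j n
  rw [h, swap_apply_left] at this; omega

theorem residueSwap_of_mod_eq_right {n : ℕ} (h : n % p = j) :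
    residueSwap p i j n + j = n + i := by
  have := residueSwap_add_mod p i j n
  rw [h, swap_apply_right] at this; omega

theorem residueSwap_le_self (hij : i ≤ j) {n : ℕ} (h : n % p ≠ i) : residueSwap p i j n ≤ n := by
  have := residueSwap_add_mod p i j n
  have : swap i j (n % p) ≤ n % p := by rw [swap_apply_def]; split_ifs <;> omega
  omega

theorem self_le_residueSwap (hij : i ≤ j) {n : ℕ} (h : n % p ≠ j) : n ≤ residueSwap p i j n := by
  have := residueSwap_add_mod p i j n
  have : n % p ≤ swap i j (n % p) := by rw [swap_apply_def]; split_ifs <;> omega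
  omega

end residueSwap

namespace HardySpace

theorem e_apply (a b : ℕ) : e a b = if b = a then 1 else 0 := by
  rw [e, lp.single_apply, Pi.single_apply]

theorem inner_e_left (k : ℕ) (x : HardySpace) : inner ℂ (e k) x = x k := by
  simp [e, lp.inner_single_left]

theorem apply_eq_tsum (T : HardySpace →L[ℂ] HardySpace) (y : HardySpace) (m : ℕ) :
    T y m = ∑' n, y n * T (e n) m := by
  have hy : HasSum (fun n => y n • e n) y := by
    simpa [e, ← lp.single_smul] using lp.hasSum_single (E := fun _ : ℕ => ℂ) (by norm_num) y
  have := hy.mapL ((innerSL ℂ (e m)).comp T)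
  simp only [comp_apply, innerSL_apply_apply, inner_e_left, map_smul, smul_eq_mul] at this
  exact this.tsum_eq.symm

theorem adjoint_apply_eq_tsum (T : HardySpace →L[ℂ] HardySpace) (x : HardySpace) (k : ℕ) :
    adjoint T x k = ∑' n, conj (T (e k) n) * x n := by
  rw [← inner_e_left, adjoint_inner_right, lp.inner_eq_tsum]
  exact tsum_congr fun n => by rw [RCLike.inner_apply, mul_comm]

theorem adjoint_e_apply (T : HardySpace →L[ℂ] HardySpace) (a b : ℕ) :
    adjoint T (e b) a = conj (T (e a) b) := by
  rw [← inner_e_left, adjoint_inner_right, ← inner_conj_symm, inner_e_left]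

variable {σ : ℕ → ℕ} {C : HardySpace → HardySpace}

theorem apply_e_of_apply_eq_conj (hσ : Function.Involutive σ)
    (hC : ∀ x n, C x n = conj (x (σ n))) (n : ℕ) : C (e n) = e (σ n) := by
  ext k
  simp only [hC, e_apply, hσ.eq_iff]
  split_ifs <;> simp

theorem conj_comp_eq_adjoint_iff (hσ : Function.Involutive σ)
    (hC : ∀ x n, C x n = conj (x (σ n))) (T : HardySpace →L[ℂ] HardySpace) :
    (∀ x, C (T (C x)) = adjoint T x) ↔ ∀ a b, T (e (σ b)) (σ a) = T (e a) b := by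
  constructor
  · intro h a b
    have := congrArg (fun y : HardySpace => y a) (h (e b))
    simpa [hC, apply_e_of_apply_eq_conj hσ hC, adjoint_e_apply] using congrArg conj this
  · intro h x
    ext k
    calc C (T (C x)) k = ∑' n, x (σ n) * conj (T (e n) (σ k)) := by
          simp [hC, apply_eq_tsum T (C x), Complex.conj_tsum]
      _ = ∑' n, x n * conj (T (e (σ n)) (σ k)) := by
          rw [← (hσ.toPerm σ).tsum_eq]
          simp [hσ _]
      _ = adjoint T x k := by
          simp [h, adjoint_apply_eq_tsum, mul_comm]

end HardySpace

theorem eq_zero_of_forall_exists_lt {α E : Type*} [Preorder α] [TopologicalSpace E] [T1Space E]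
    [Zero E] {f : α → E} (hf : Tendsto f cofinite (𝓝 0)) {P : α → Prop}
    (hP : ∀ z, P z → ∃ w < z, P w ∧ f w = f z) {z : α} (hz : P z) : f z = 0 := by
  choose! s hs using hP
  have hiter : ∀ t, P (s^[t] z) ∧ f (s^[t] z) = f z := by
    intro t
    induction t with
    | zero => exact ⟨hz, rfl⟩
    | succ t ih =>
      rw [Function.iterate_succ_apply']
      obtain ⟨-, hPs, hfs⟩ := hs _ ih.1
      exact ⟨hPs, hfs.trans ih.2⟩
  have hanti : StrictAnti fun t => s^[t] z := strictAnti_nat_of_succ_lt fun t => by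
    rw [Function.iterate_succ_apply']
    exact (hs _ (hiter t).1).1
  have := hf.comp hanti.injective.tendsto_cofinite
  simp only [Function.comp_def, hiter] at this
  exact tendsto_const_nhds_iff.1 this

theorem exists_mod_eq_sub_eq {p r : ℕ} (hr : r < p) (z : ℤ) :
    ∃ a b : ℕ, a % p = r ∧ (b : ℤ) - a = z := by
  obtain ⟨N, hN⟩ : ∃ N : ℕ, -z ≤ N := ⟨z.natAbs, by omega⟩
  refine ⟨r + p * N, (r + p * N + z).toNat, ?_, ?_⟩
  · rw [Nat.add_mul_mod_self_left, Nat.mod_eq_of_lt hr]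
  · have : N ≤ p * N := Nat.le_mul_of_pos_left _ (by omega)
    push_cast
    omega

theorem forall_not_dvd_iff_forall_add_mul {p : ℕ} (hp : 0 < p) {P : ℤ → Prop} :
    (∀ z, ¬ (p : ℤ) ∣ z → P z) ↔ ∀ (l : ℤ) (r : ℕ), 1 ≤ r → r ≤ p - 1 → P (r + p * l) := by
  constructor
  · intro h l r hr1 hr2
    refine h _ fun hdvd => ?_
    have : p ∣ r := Int.natCast_dvd_natCast.1 ((dvd_add_left (dvd_mul_right _ _)).1 hdvd)
    have := Nat.le_of_dvd (by omega) this
    omega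
  · intro h z hz
    have hr0 : z % p ≠ 0 := fun h0 => hz (Int.dvd_of_emod_eq_zero h0)
    have hr1 := Int.emod_nonneg z (by omega : (p : ℤ) ≠ 0)
    have hr2 := Int.emod_lt_of_pos z (by omega : (0 : ℤ) < p)
    have := h (z / p) (z % p).toNat (by omega) (by omega)
    rwa [Int.toNat_of_nonneg hr1, Int.emod_add_mul_ediv] at this

section residueSwapInvariant

variable {E : Type*} {p i j : ℕ} {φ : ℤ → E}

theorem eq_neg_of_residueSwap_invariant
    (hF : ∀ a b : ℕ, φ ((residueSwap p i j a : ℤ) - residueSwap p i j b) = φ (b - a)) (l : ℤ) :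
    φ (p * l) = φ (-(p * l)) := by
  have key (n : ℕ) : φ (-(p * n)) = φ (p * n) := by
    have := hF 0 (p * n)
    rw [residueSwap_sub_residueSwap (by simp [Nat.ModEq])] at this
    simpa using this
  obtain ⟨n, rfl | rfl⟩ := Int.eq_nat_or_neg l
  · exact (key n).symm
  · simpa using key n

theorem exists_lt_of_residueSwap_invariant (hij : i < j) (hjp : j < p)
    (hF : ∀ a b : ℕ, φ ((residueSwap p i j a : ℤ) - residueSwap p i j b) = φ (b - a))
    {z : ℤ} (hz : ¬ (p : ℤ) ∣ z) : ∃ w < z, ¬ (p : ℤ) ∣ w ∧ φ w = φ z := by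
  have hip := hij.trans hjp
  obtain ⟨a, b, ha, rfl⟩ := exists_mod_eq_sub_eq hip z
  have hb : b % p ≠ i := fun hb => hz (Nat.modEq_iff_dvd.1 (ha.trans hb.symm))
  have hy : ¬ (p : ℤ) ∣ (residueSwap p i j a : ℤ) - residueSwap p i j b := by
    rwa [residueSwap_sub_residueSwap_dvd_iff hip hjp, dvd_sub_comm]
  obtain ⟨a', b', ha', hab'⟩ :=
    exists_mod_eq_sub_eq hjp ((residueSwap p i j a : ℤ) - residueSwap p i j b)
  have hb' : b' % p ≠ j := fun hb' => hy (hab' ▸ Nat.modEq_iff_dvd.1 (ha'.trans hb'.symm))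
  refine ⟨(residueSwap p i j a' : ℤ) - residueSwap p i j b', ?_, ?_, ?_⟩
  · -- each of the two reflections moves the difference by at least `j - i`
    have := residueSwap_of_mod_eq_left (j := j) ha
    have := residueSwap_le_self (p := p) hij.le hb
    have := residueSwap_of_mod_eq_right (i := i) ha'
    have := self_le_residueSwap (p := p) hij.le hb'
    omega
  · rwa [residueSwap_sub_residueSwap_dvd_iff hip hjp, dvd_sub_comm, hab']
  · rw [hF, hab', hF]

theorem residueSwap_invariant_iff [TopologicalSpace E] [T1Space E] [Zero E] (hij : i < j)
    (hjp : j < p) (hφ : Tendsto φ cofinite (𝓝 0)) :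
    (∀ a b : ℕ, φ ((residueSwap p i j a : ℤ) - residueSwap p i j b) = φ (b - a)) ↔
      (∀ l : ℤ, φ (p * l) = φ (-(p * l))) ∧ ∀ z : ℤ, ¬ (p : ℤ) ∣ z → φ z = 0 := by
  constructor
  · intro hF
    exact ⟨eq_neg_of_residueSwap_invariant hF, fun z hz =>
      eq_zero_of_forall_exists_lt hφ (fun _ => exists_lt_of_residueSwap_invariant hij hjp hF) hz⟩
  · rintro ⟨heven, hzero⟩ a b
    by_cases hab : a ≡ b [MOD p]
    · obtain ⟨l, hl⟩ := Nat.modEq_iff_dvd.1 hab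
      rw [residueSwap_sub_residueSwap hab, show (a : ℤ) - b = -(p * l) by omega, hl, heven]
    · have hba : ¬ (p : ℤ) ∣ (b : ℤ) - a := mt Nat.modEq_iff_dvd.2 hab
      rw [hzero _ hba, hzero]
      rwa [residueSwap_sub_residueSwap_dvd_iff (hij.trans hjp) hjp, dvd_sub_comm]

end residueSwapInvariant

theorem apply_eq_conj_apply_residueSwap {p i j : ℕ} (hp : 0 < p)
    {C : HardySpace → HardySpace}
    (hC1 : ∀ (a : HardySpace) (k : ℕ), (C a) (i + p * k) = conj (a (j + p * k)))
    (hC2 : ∀ (a : HardySpace) (k : ℕ), (C a) (j + p * k) = conj (a (i + p * k)))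
    (hC3 : ∀ (a : HardySpace) (k m : ℕ), m < p → m ≠ i → m ≠ j →
      (C a) (m + p * k) = conj (a (m + p * k)))
    (x : HardySpace) (n : ℕ) : C x n = conj (x (residueSwap p i j n)) := by
  have hn := Nat.mod_lt n hp
  rw [← Nat.mod_add_div n p, residueSwap_add_mul hn]
  rcases eq_or_ne (n % p) i with hni | hni
  · rw [hni, swap_apply_left, hC1]
  rcases eq_or_ne (n % p) j with hnj | hnj
  · rw [hnj, swap_apply_right, hC2]
  · rw [swap_apply_of_ne_of_ne hni hnj, hC3 x _ _ hn hni hnj]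

/-- Characterization of `C_p^{i,j}`-symmetric Toeplitz operators when `p = mq + 1` with `m ≥ 2`, `i = q-1`, `j = p-1`: `C_p^{i,j} T_φ C_p^{i,j} = T_φ*` iff `φhat (pl) = φhat (-pl)` for all `l ∈ ℤ`
and `φhat (r + pl) = 0` for all `l ∈ ℤ` and `1 ≤ r ≤ p-1`. Here `φhat` is the (square-summable)
sequence of Fourier coefficients of `φ ∈ L^∞(𝕋)`, `T_φ` acts on the basis by
`(T_φ e_j)_m = φhat (m-j)`, and `C_p^{i,j}` swaps-and-conjugates the coefficients at indices
`i + pk` and `j + pk` and conjugates all others. -/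
theorem toeplitz_Cpij_symmetric_iff_mq (p i j m q : ℕ) (hm : 2 ≤ m) (hq : 1 ≤ q)
    (hp : p = m * q + 1) (hi : i = q - 1) (hj : j = p - 1)
    (φhat : ℤ → ℂ) (hsq : Summable fun k => ‖φhat k‖ ^ 2)
    (T : HardySpace →L[ℂ] HardySpace)
    (hT : ∀ j' m : ℕ, (T (e j')) m = φhat ((m : ℤ) - (j' : ℤ)))
    (C : HardySpace → HardySpace)
    (hC1 : ∀ (a : HardySpace) (k : ℕ), (C a) (i + p * k) = conj (a (j + p * k)))
    (hC2 : ∀ (a : HardySpace) (k : ℕ), (C a) (j + p * k) = conj (a (i + p * k)))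
    (hC3 : ∀ (a : HardySpace) (k m : ℕ), m < p → m ≠ i → m ≠ j →
      (C a) (m + p * k) = conj (a (m + p * k))) :
    (∀ x, C (T (C x)) = ContinuousLinearMap.adjoint T x) ↔
      ((∀ l : ℤ, φhat ((p : ℤ) * l) = φhat (-((p : ℤ) * l))) ∧
        ∀ (l : ℤ) (r : ℕ), 1 ≤ r → r ≤ p - 1 → φhat ((r : ℤ) + p * l) = 0) := by
  have hij : i < j := by
    have : q ≤ m * q := Nat.le_mul_of_pos_left q (by omega)
    omega
  have hjp : j < p := by omega
  have hφ : Tendsto φhat cofinite (𝓝 0) := by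
    rw [tendsto_zero_iff_norm_tendsto_zero]
    simpa using hsq.tendsto_cofinite_zero.sqrt
  rw [HardySpace.conj_comp_eq_adjoint_iff (residueSwap_involutive (hij.trans hjp) hjp)
      (apply_eq_conj_apply_residueSwap (by omega) hC1 hC2 hC3)]
  simp only [hT]
  rw [residueSwap_invariant_iff hij hjp hφ, forall_not_dvd_iff_forall_add_mul (by omega)]
end

section
/- Let (c_k)_{k∈ℤ} be a square-summable family of complex numbers satisfying, for p ∈ ℕ even with half := p/2: c_{half + pl} = c_{half − pl} for all l ∈ ℤ, and c_{−half + pl} = c_{−half − pl} for all l ∈ ℤ. Then c_{half + pl} = 0 for all l ∈ ℤ. -/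
/-- If `(c_k)` is square-summable, `p = 2 * half` is even with `p ≥ 2`, and
`c (half + pl) = c (half - pl)` and `c (-half + pl) = c (-half - pl)` for all `l ∈ ℤ`,
then `c (half + pl) = 0` for all `l ∈ ℤ`. -/
theorem half_period_sym_vanish (c : ℤ → ℂ) (hc : Summable fun k => ‖c k‖ ^ 2)
    (p half : ℕ) (hp : 2 ≤ p) (hhalf : p = 2 * half)
    (h1 : ∀ l : ℤ, c ((half : ℤ) + p * l) = c ((half : ℤ) - p * l))
    (h2 : ∀ l : ℤ, c (-(half : ℤ) + p * l) = c (-(half : ℤ) - p * l)) :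
    ∀ l : ℤ, c ((half : ℤ) + p * l) = 0 := by
  set a : ℤ → ℂ := fun l => c ((half : ℤ) + p * l) with ha
  have hp2 : (p : ℤ) = 2 * half := by exact_mod_cast hhalf
  have hppos : (0 : ℤ) < p := by exact_mod_cast lt_of_lt_of_le (by norm_num) hp
  have heven : ∀ l : ℤ, a l = a (-l) := by
    intro l
    have := h1 l
    have e : (half : ℤ) - p * l = half + p * (-l) := by ring
    rw [e] at this
    exact this
  have hper : ∀ l : ℤ, a (l + 2) = a l := by
    intro l
    have := h2 (l + 1)
    have e1 : -(half : ℤ) + p * (l + 1) = half + p * l := by rw [hp2]; ring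
    have e2 : -(half : ℤ) - p * (l + 1) = half + p * (-(l + 2)) := by rw [hp2]; ring
    rw [e1, e2] at this
    have h3 : a l = a (-(l + 2)) := this
    rw [h3, ← heven (l + 2)]
  have hind : ∀ (l : ℤ) (n : ℕ), a (l + 2 * n) = a l := by
    intro l n
    induction n with
    | zero => simp
    | succ m ih =>
      have : l + 2 * ((m : ℤ) + 1) = (l + 2 * m) + 2 := by ring
      rw [Nat.cast_succ, this, hper, ih]
  intro l
  -- The sequence n ↦ c (half + p * (l + 2n)) is constantly `a l`, and must tend to 0.
  have hg : Function.Injective (fun n : ℕ => (half : ℤ) + p * (l + 2 * n)) := by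
    intro m n hmn
    simp only at hmn
    have : (m : ℤ) = n := by
      have := hmn
      nlinarith [this]
    exact_mod_cast this
  have htend : Filter.Tendsto (fun n : ℕ => ‖c ((half : ℤ) + p * (l + 2 * n))‖ ^ 2)
      Filter.atTop (nhds 0) := by
    have h0 := hc.tendsto_cofinite_zero
    have := h0.comp (hg.tendsto_cofinite)
    rwa [Nat.cofinite_eq_atTop] at this
  have hconst : (fun n : ℕ => ‖c ((half : ℤ) + p * (l + 2 * n))‖ ^ 2)
      = fun _ : ℕ => ‖a l‖ ^ 2 := by
    funext n
    have := hind l n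
    simp only [ha] at this ⊢
    rw [this]
  rw [hconst] at htend
  have : ‖a l‖ ^ 2 = 0 := tendsto_nhds_unique tendsto_const_nhds htend
  have : ‖a l‖ = 0 := by nlinarith [norm_nonneg (a l)]
  simpa [ha] using norm_eq_zero.mp this
end

section
/- Let C₁ and C₂ be conjugations on a complex Hilbert space H that commute: C₁C₂ = C₂C₁. Then the map C̃ on H ⊕ H defined by C̃(x, y) = ((C₂x + C₁y)/√2, (C₁x − C₂y)/√2) is a conjugation on H ⊕ H. -/
open scoped ComplexConjugate

/-! The block map `C̃ = 2^{-1/2} [[C₂, C₁], [C₁, -C₂]]` is conjugate-linear because its entries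
are. Squaring it, the off-diagonal entries are `C₂C₁ - C₁C₂ = 0` by commutativity and the
diagonal ones are `(C₂² + C₁²)/2 = 1`. For the norm, `C₁C₂` is an isometry carrying
`C₁x - C₂y` to `C₂x - C₁y`, so `‖C̃(x, y)‖²` is half of `‖C₂x + C₁y‖² + ‖C₂x - C₁y‖²`, which
by the parallelogram law is `‖C₂x‖² + ‖C₁y‖² = ‖x‖² + ‖y‖²`. -/

def IsConjLinear (R : Type*) {M : Type*} [CommSemiring R] [StarRing R] [AddCommMonoid M]
    [Module R M] (C : M → M) : Prop :=
  ∀ (α β : R) (x y : M), C (α • x + β • y) = starRingEnd R α • C x + starRingEnd R β • C y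

namespace IsConjLinear

theorem map_add {R M : Type*} [CommSemiring R] [StarRing R] [AddCommMonoid M] [Module R M]
    {C : M → M} (hC : IsConjLinear R C) (x y : M) : C (x + y) = C x + C y := by
  simpa using hC 1 1 x y

theorem map_smul {R M : Type*} [CommSemiring R] [StarRing R] [AddCommMonoid M] [Module R M]
    {C : M → M} (hC : IsConjLinear R C) (α : R) (x : M) : C (α • x) = starRingEnd R α • C x := by
  simpa using hC α 0 x x

theorem map_sub {R M : Type*} [CommRing R] [StarRing R] [AddCommGroup M] [Module R M]
    {C : M → M} (hC : IsConjLinear R C) (x y : M) : C (x - y) = C x - C y := by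
  simpa [sub_eq_add_neg] using hC 1 (-1) x y

end IsConjLinear

theorem conj_inv_sqrt_two : conj ((Real.sqrt 2 : ℂ)⁻¹) = (Real.sqrt 2 : ℂ)⁻¹ := by
  simp

theorem inv_sqrt_two_mul_inv_sqrt_two : (Real.sqrt 2 : ℂ)⁻¹ * (Real.sqrt 2 : ℂ)⁻¹ = 2⁻¹ := by
  rw [← mul_inv, ← Complex.ofReal_mul, Real.mul_self_sqrt zero_le_two, Complex.ofReal_ofNat]

theorem norm_inv_sqrt_two_sq : ‖(Real.sqrt 2 : ℂ)⁻¹‖ ^ 2 = 2⁻¹ := by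
  rw [norm_inv, Complex.norm_real, Real.norm_of_nonneg (Real.sqrt_nonneg 2), inv_pow,
    Real.sq_sqrt zero_le_two]

section BlockConj

variable {H : Type*}

noncomputable def blockConj [AddCommGroup H] [Module ℂ H] (C₁ C₂ : H → H)
    (z : WithLp 2 (H × H)) : WithLp 2 (H × H) :=
  WithLp.toLp 2 ((Real.sqrt 2 : ℂ)⁻¹ • (C₂ z.fst + C₁ z.snd),
    (Real.sqrt 2 : ℂ)⁻¹ • (C₁ z.fst - C₂ z.snd))

theorem isConjLinear_blockConj [AddCommGroup H] [Module ℂ H] {C₁ C₂ : H → H}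
    (hC₁ : IsConjLinear ℂ C₁) (hC₂ : IsConjLinear ℂ C₂) : IsConjLinear ℂ (blockConj C₁ C₂) := by
  intro α β x y
  refine WithLp.ofLp_injective 2 (Prod.ext ?_ ?_)
  · show (Real.sqrt 2 : ℂ)⁻¹ • (C₂ (α • x.fst + β • y.fst) + C₁ (α • x.snd + β • y.snd)) =
      conj α • (Real.sqrt 2 : ℂ)⁻¹ • (C₂ x.fst + C₁ x.snd) +
        conj β • (Real.sqrt 2 : ℂ)⁻¹ • (C₂ y.fst + C₁ y.snd)
    rw [hC₁, hC₂]
    module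
  · show (Real.sqrt 2 : ℂ)⁻¹ • (C₁ (α • x.fst + β • y.fst) - C₂ (α • x.snd + β • y.snd)) =
      conj α • (Real.sqrt 2 : ℂ)⁻¹ • (C₁ x.fst - C₂ x.snd) +
        conj β • (Real.sqrt 2 : ℂ)⁻¹ • (C₁ y.fst - C₂ y.snd)
    rw [hC₁, hC₂]
    module

theorem blockConj_blockConj [AddCommGroup H] [Module ℂ H] {C₁ C₂ : H → H}
    (hC₁ : IsConjLinear ℂ C₁) (hC₂ : IsConjLinear ℂ C₂) (hinv₁ : ∀ x, C₁ (C₁ x) = x)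
    (hinv₂ : ∀ x, C₂ (C₂ x) = x) (hcomm : ∀ x, C₁ (C₂ x) = C₂ (C₁ x))
    (z : WithLp 2 (H × H)) : blockConj C₁ C₂ (blockConj C₁ C₂ z) = z := by
  have hs := inv_sqrt_two_mul_inv_sqrt_two
  refine WithLp.ofLp_injective 2 (Prod.ext ?_ ?_)
  · show (Real.sqrt 2 : ℂ)⁻¹ • (C₂ ((Real.sqrt 2 : ℂ)⁻¹ • (C₂ z.fst + C₁ z.snd)) +
      C₁ ((Real.sqrt 2 : ℂ)⁻¹ • (C₁ z.fst - C₂ z.snd))) = z.fst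
    rw [hC₁.map_smul, hC₂.map_smul, conj_inv_sqrt_two, hC₂.map_add, hC₁.map_sub, hinv₁, hinv₂,
      hcomm]
    match_scalars
    · linear_combination 2 * hs
    · ring
  · show (Real.sqrt 2 : ℂ)⁻¹ • (C₁ ((Real.sqrt 2 : ℂ)⁻¹ • (C₂ z.fst + C₁ z.snd)) -
      C₂ ((Real.sqrt 2 : ℂ)⁻¹ • (C₁ z.fst - C₂ z.snd))) = z.snd
    rw [hC₁.map_smul, hC₂.map_smul, conj_inv_sqrt_two, hC₁.map_add, hC₂.map_sub, hinv₁, hinv₂,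
      hcomm]
    match_scalars
    · ring
    · linear_combination 2 * hs

theorem norm_sub_eq_norm_sub_of_commute [SeminormedAddCommGroup H] [Module ℂ H]
    {C₁ C₂ : H → H} (hC₁ : IsConjLinear ℂ C₁) (hC₂ : IsConjLinear ℂ C₂)
    (hinv₁ : ∀ x, C₁ (C₁ x) = x) (hinv₂ : ∀ x, C₂ (C₂ x) = x)
    (hiso₁ : ∀ x, ‖C₁ x‖ = ‖x‖) (hiso₂ : ∀ x, ‖C₂ x‖ = ‖x‖)
    (hcomm : ∀ x, C₁ (C₂ x) = C₂ (C₁ x)) (x y : H) : ‖C₁ x - C₂ y‖ = ‖C₂ x - C₁ y‖ := by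
  calc ‖C₁ x - C₂ y‖ = ‖C₁ (C₂ (C₁ x - C₂ y))‖ := by rw [hiso₁, hiso₂]
    _ = ‖C₂ x - C₁ y‖ := by rw [hC₂.map_sub, hinv₂, hC₁.map_sub, hcomm, hinv₁]

theorem norm_blockConj [NormedAddCommGroup H] [InnerProductSpace ℂ H]
    {C₁ C₂ : H → H} (hC₁ : IsConjLinear ℂ C₁) (hC₂ : IsConjLinear ℂ C₂)
    (hinv₁ : ∀ x, C₁ (C₁ x) = x) (hinv₂ : ∀ x, C₂ (C₂ x) = x)
    (hiso₁ : ∀ x, ‖C₁ x‖ = ‖x‖) (hiso₂ : ∀ x, ‖C₂ x‖ = ‖x‖)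
    (hcomm : ∀ x, C₁ (C₂ x) = C₂ (C₁ x)) (z : WithLp 2 (H × H)) :
    ‖blockConj C₁ C₂ z‖ = ‖z‖ := by
  have hpar := parallelogram_law_with_norm ℂ (C₂ z.fst) (C₁ z.snd)
  have hsq : ‖blockConj C₁ C₂ z‖ ^ 2 = ‖z‖ ^ 2 := by
    rw [WithLp.prod_norm_sq_eq_of_L2, WithLp.prod_norm_sq_eq_of_L2]
    show ‖(Real.sqrt 2 : ℂ)⁻¹ • (C₂ z.fst + C₁ z.snd)‖ ^ 2 +
      ‖(Real.sqrt 2 : ℂ)⁻¹ • (C₁ z.fst - C₂ z.snd)‖ ^ 2 = _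
    rw [norm_smul, norm_smul, mul_pow, mul_pow, norm_inv_sqrt_two_sq,
      norm_sub_eq_norm_sub_of_commute hC₁ hC₂ hinv₁ hinv₂ hiso₁ hiso₂ hcomm, ← hiso₂ z.fst,
      ← hiso₁ z.snd]
    linear_combination 2⁻¹ * hpar
  exact (pow_left_inj₀ (norm_nonneg _) (norm_nonneg _) two_ne_zero).1 hsq

end BlockConj

theorem block_C1_C2_conjugation_general {H : Type*} [NormedAddCommGroup H] [InnerProductSpace ℂ H]
    (C₁ C₂ : H → H)
    (hlin₁ : ∀ (α β : ℂ) (x y : H), C₁ (α • x + β • y) = conj α • C₁ x + conj β • C₁ y)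
    (hinv₁ : ∀ x, C₁ (C₁ x) = x)
    (hiso₁ : ∀ x, ‖C₁ x‖ = ‖x‖)
    (hlin₂ : ∀ (α β : ℂ) (x y : H), C₂ (α • x + β • y) = conj α • C₂ x + conj β • C₂ y)
    (hinv₂ : ∀ x, C₂ (C₂ x) = x)
    (hiso₂ : ∀ x, ‖C₂ x‖ = ‖x‖)
    (hcomm : ∀ x, C₁ (C₂ x) = C₂ (C₁ x)) :
    ∃ C : WithLp 2 (H × H) → WithLp 2 (H × H),
      (∀ z : WithLp 2 (H × H),
        (WithLp.equiv 2 (H × H)) (C z) =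
          (((Real.sqrt 2 : ℂ))⁻¹ • (C₂ ((WithLp.equiv 2 (H × H)) z).1 + C₁ ((WithLp.equiv 2 (H × H)) z).2),
           ((Real.sqrt 2 : ℂ))⁻¹ • (C₁ ((WithLp.equiv 2 (H × H)) z).1 - C₂ ((WithLp.equiv 2 (H × H)) z).2))) ∧
      (∀ (α β : ℂ) (x y : WithLp 2 (H × H)),
          C (α • x + β • y) = conj α • C x + conj β • C y) ∧
      (∀ z, C (C z) = z) ∧
      (∀ z, ‖C z‖ = ‖z‖) :=
  ⟨blockConj C₁ C₂, fun _ => rfl, isConjLinear_blockConj hlin₁ hlin₂,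
    blockConj_blockConj hlin₁ hlin₂ hinv₁ hinv₂ hcomm,
    norm_blockConj hlin₁ hlin₂ hinv₁ hinv₂ hiso₁ hiso₂ hcomm⟩

/-- If `C₁`, `C₂` are commuting conjugations on a complex Hilbert space `H`, then the map
`C̃(x, y) = ((C₂x + C₁y)/√2, (C₁x − C₂y)/√2)` on the Hilbert direct sum `H ⊕ H` is a
conjugation: conjugate-linear, involutive and isometric. -/
theorem block_C1_C2_conjugation {H : Type*} [NormedAddCommGroup H] [InnerProductSpace ℂ H]
    [CompleteSpace H] (C₁ C₂ : H → H)
    (hlin₁ : ∀ (α β : ℂ) (x y : H), C₁ (α • x + β • y) = conj α • C₁ x + conj β • C₁ y)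
    (hinv₁ : ∀ x, C₁ (C₁ x) = x)
    (hiso₁ : ∀ x, ‖C₁ x‖ = ‖x‖)
    (hlin₂ : ∀ (α β : ℂ) (x y : H), C₂ (α • x + β • y) = conj α • C₂ x + conj β • C₂ y)
    (hinv₂ : ∀ x, C₂ (C₂ x) = x)
    (hiso₂ : ∀ x, ‖C₂ x‖ = ‖x‖)
    (hcomm : ∀ x, C₁ (C₂ x) = C₂ (C₁ x)) :
    ∃ C : WithLp 2 (H × H) → WithLp 2 (H × H),
      (∀ z : WithLp 2 (H × H),
        (WithLp.equiv 2 (H × H)) (C z) =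
          (((Real.sqrt 2 : ℂ))⁻¹ • (C₂ ((WithLp.equiv 2 (H × H)) z).1 + C₁ ((WithLp.equiv 2 (H × H)) z).2),
           ((Real.sqrt 2 : ℂ))⁻¹ • (C₁ ((WithLp.equiv 2 (H × H)) z).1 - C₂ ((WithLp.equiv 2 (H × H)) z).2))) ∧
      (∀ (α β : ℂ) (x y : WithLp 2 (H × H)),
          C (α • x + β • y) = conj α • C x + conj β • C y) ∧
      (∀ z, C (C z) = z) ∧
      (∀ z, ‖C z‖ = ‖z‖) :=
  block_C1_C2_conjugation_general C₁ C₂ hlin₁ hinv₁ hiso₁ hlin₂ hinv₂ hiso₂ hcomm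
end

section
/- Let (c_k)_{k∈ℤ} and (d_k)_{k∈ℤ} be square-summable families of complex numbers satisfying for all l ∈ ℤ: c(2l) = d(−2l), c(2l−1) = d(−2l−1), and c(2l+1) = d(−2l+1). Then c(2l+1) = 0 and d(2l+1) = 0 for all l ∈ ℤ. -/
/-- If `c` and `d` are square-summable families on `ℤ` with `c(2l) = d(−2l)`,
`c(2l−1) = d(−2l−1)` and `c(2l+1) = d(−2l+1)` for all `l ∈ ℤ`, then all odd coefficients
of `c` and `d` vanish. -/
theorem odd_coeff_vanish (c d : ℤ → ℂ)
    (hc : Summable fun k => ‖c k‖ ^ 2) (hd : Summable fun k => ‖d k‖ ^ 2)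
    (h0 : ∀ l : ℤ, c (2 * l) = d (-(2 * l)))
    (h1 : ∀ l : ℤ, c (2 * l - 1) = d (-(2 * l) - 1))
    (h2 : ∀ l : ℤ, c (2 * l + 1) = d (-(2 * l) + 1)) :
    ∀ l : ℤ, c (2 * l + 1) = 0 ∧ d (2 * l + 1) = 0 := by
  -- Step: c(2m+3) = c(2m-1)
  have step : ∀ m : ℤ, c (2 * m + 3) = c (2 * m - 1) := by
    intro m
    have ha := h2 (m + 1)
    have hb := h1 m
    have : (2 * (m + 1) + 1 : ℤ) = 2 * m + 3 := by ring
    rw [this] at ha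
    have : (-(2 * (m + 1)) + 1 : ℤ) = -(2 * m) - 1 := by ring
    rw [this] at ha
    rw [ha, ← hb]
  -- hence c is constant along arithmetic progressions of step 4 among odds
  have key : ∀ l : ℤ, ∀ n : ℕ, c (2 * l + 4 * n + 1) = c (2 * l + 1) := by
    intro l n
    induction n with
    | zero => norm_num
    | succ n ih =>
      have hs := step (l + 2 * n + 1)
      have e1 : (2 * (l + 2 * n + 1) + 3 : ℤ) = 2 * l + 4 * (n + 1 : ℕ) + 1 := by
        push_cast; ring
      have e2 : (2 * (l + 2 * n + 1) - 1 : ℤ) = 2 * l + 4 * n + 1 := by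
        push_cast; ring
      rw [e1, e2] at hs
      rw [hs, ih]
  have hczero : ∀ l : ℤ, c (2 * l + 1) = 0 := by
    intro l
    have hinj : Function.Injective (fun n : ℕ => (2 * l + 4 * (n : ℤ) + 1)) := by
      intro a b hab
      simp only at hab
      omega
    have htc : Filter.Tendsto (fun n : ℕ => (2 * l + 4 * (n : ℤ) + 1))
        Filter.cofinite Filter.cofinite := hinj.tendsto_cofinite
    have h0' : Filter.Tendsto (fun k : ℤ => ‖c k‖ ^ 2) Filter.cofinite (nhds 0) :=
      hc.tendsto_cofinite_zero
    have hcomp : Filter.Tendsto (fun n : ℕ => ‖c (2 * l + 4 * (n : ℤ) + 1)‖ ^ 2)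
        Filter.cofinite (nhds 0) := h0'.comp htc
    have hconst : (fun n : ℕ => ‖c (2 * l + 4 * (n : ℤ) + 1)‖ ^ 2)
        = fun _ : ℕ => ‖c (2 * l + 1)‖ ^ 2 := by
      funext n; rw [key l n]
    rw [hconst] at hcomp
    have : ‖c (2 * l + 1)‖ ^ 2 = 0 :=
      (tendsto_nhds_unique tendsto_const_nhds hcomp)
    have : ‖c (2 * l + 1)‖ = 0 := by
      nlinarith [norm_nonneg (c (2 * l + 1))]
    simpa using this
  intro l
  refine ⟨hczero l, ?_⟩
  have h := h2 (-l)
  have e : (-(2 * (-l)) + 1 : ℤ) = 2 * l + 1 := by ring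
  rw [e] at h
  rw [← h, hczero (-l)]
end
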